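/- Let u, v ∈ L^p(Ω)ⁿ for a finite measure space Ω, 1 < p ≤ 2, and suppose ∫_Ω ⟨|u|^{p-2}u − |v|^{p-2}v, u − v⟩ dμ → 0 along a sequence while ∫_Ω (1 + |u| + |v|)^p dμ stays uniformly bounded. Then ∫_Ω |u − v|^p dμ → 0 along that sequence. More precisely: for any measurable u, v : Ω → ℝⁿ, ∫_Ω |u − v|^p dμ ≤ ( c ∫_Ω ⟨|u|^{p-2}u − |v|^{p-2}v, u − v⟩ dμ )^{p/2} · ( ∫_Ω (1 + |u| + |v|)^p dμ )^{(2-p)/2} for a constant c depending only on p. -/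

import Mathlib

/-!
Pointwise, `(p - 1) / 2 * ‖x - y‖ ^ 2 * (1 + ‖x‖ + ‖y‖) ^ (p - 2)` is bounded by
`⟪‖x‖ ^ (p - 2) • x - ‖y‖ ^ (p - 2) • y, x - y⟫`. Both sides are affine in `⟪x, y⟫`, so it is enough
to compare them at the extreme values `⟪x, y⟫ = ± ‖x‖ * ‖y‖`, where the bound comes from the
concavity of `t ↦ t ^ (p - 1)`. With `h = 1 + ‖u‖ + ‖v‖` one has
`‖u - v‖ ^ p = (‖u - v‖ ^ 2 * h ^ (p - 2)) ^ (p / 2) * (h ^ p) ^ ((2 - p) / 2)`, and Hölder's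
inequality with the exponents `p / 2 + (2 - p) / 2 = 1` gives the integral bound with
`c = 2 / (p - 1)`.
-/

open MeasureTheory Real RealInnerProductSpace

theorem Real.rpow_sub_two_mul_self {a p : ℝ} (ha : 0 ≤ a) (hp : p ≠ 1) :
    a ^ (p - 2) * a = a ^ (p - 1) := by
  rw [← Real.rpow_add_one' ha (by contrapose! hp; linarith)]
  ring_nf

theorem Real.mul_rpow_sub_one_mul_sub_le_rpow_sub_rpow {q a b : ℝ} (hq0 : 0 ≤ q) (hq1 : q ≤ 1)
    (ha : 0 < a) (hb : 0 ≤ b) : q * a ^ (q - 1) * (a - b) ≤ a ^ q - b ^ q := by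
  have hbern := rpow_one_add_le_one_add_mul_self (s := b / a - 1)
    (by linarith [div_nonneg hb ha.le]) hq0 hq1
  rw [add_sub_cancel, Real.div_rpow hb ha.le, div_le_iff₀ (by positivity)] at hbern
  have h_tangent : q * a ^ (q - 1) * (a - b) = q * a ^ q * (1 - b / a) := by
    rw [Real.rpow_sub_one ha.ne']
    field_simp
  linear_combination h_tangent + hbern

theorem rpow_quadratic_form_lower_bound_of_le {p a b s : ℝ} (hp1 : 1 < p) (hp2 : p ≤ 2)
    (hb : 0 ≤ b) (hba : b ≤ a) (hs : |s| ≤ a * b) :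
    (p - 1) / 2 * (a * a + b * b - 2 * s) * (1 + a + b) ^ (p - 2) ≤
      a ^ (p - 2) * a * a + b ^ (p - 2) * b * b - (a ^ (p - 2) + b ^ (p - 2)) * s := by
  obtain rfl | ha := (hb.trans hba).eq_or_lt
  · obtain rfl : b = 0 := le_antisymm hba hb
    obtain rfl : s = 0 := abs_nonpos_iff.1 (by simpa using hs)
    simp
  set K := (1 + a + b) ^ (p - 2)
  have hK : K ≤ a ^ (p - 2) := Real.rpow_le_rpow_of_nonpos ha (by linarith) (by linarith)
  have hK0 : 0 < K := by positivity
  have h_at_ab : (p - 1) / 2 * (a - b) ^ 2 * K ≤ (a ^ (p - 2) * a - b ^ (p - 2) * b) * (a - b) := by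
    have h_tangent := Real.mul_rpow_sub_one_mul_sub_le_rpow_sub_rpow (q := p - 1)
      (by linarith) (by linarith) ha hb
    rw [show p - 1 - 1 = p - 2 by ring, ← Real.rpow_sub_two_mul_self ha.le hp1.ne',
      ← Real.rpow_sub_two_mul_self hb hp1.ne'] at h_tangent
    have hpab : 0 ≤ (p - 1) * (a - b) ^ 2 := mul_nonneg (by linarith) (sq_nonneg _)
    calc (p - 1) / 2 * (a - b) ^ 2 * K ≤ (p - 1) * (a - b) ^ 2 * K := by
          nlinarith [mul_nonneg hpab hK0.le]
      _ ≤ (p - 1) * (a - b) ^ 2 * a ^ (p - 2) := mul_le_mul_of_nonneg_left hK hpab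
      _ = (p - 1) * a ^ (p - 2) * (a - b) * (a - b) := by ring
      _ ≤ _ := mul_le_mul_of_nonneg_right h_tangent (by linarith)
  have h_at_neg_ab : (p - 1) / 2 * (a + b) ^ 2 * K ≤
      (a ^ (p - 2) * a + b ^ (p - 2) * b) * (a + b) := by
    have hKa : K * a ≤ a ^ (p - 2) * a := mul_le_mul_of_nonneg_right hK ha.le
    have hb' : 0 ≤ b ^ (p - 2) * b := by positivity
    nlinarith [mul_le_mul_of_nonneg_right hKa (by linarith : 0 ≤ a + b),
      mul_nonneg (mul_nonneg hK0.le (by linarith : 0 ≤ 2 - p)) (sq_nonneg (a + b)),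
      mul_nonneg (mul_nonneg hK0.le (by linarith : 0 ≤ a + b)) (by linarith : 0 ≤ a - b),
      mul_nonneg hb' (by linarith : 0 ≤ a + b)]
  obtain ⟨hs1, hs2⟩ := abs_le.1 hs
  -- Both sides are affine in `s`; compare at the endpoint `s = ± a * b` chosen by the slope's sign.
  rcases le_total 0 ((p - 1) * K - (a ^ (p - 2) + b ^ (p - 2))) with hc | hc
  · nlinarith [mul_le_mul_of_nonneg_left (by linarith : 0 ≤ s + a * b) hc]
  · nlinarith [mul_le_mul_of_nonpos_left hs2 hc]

theorem rpow_quadratic_form_lower_bound {p a b s : ℝ} (hp1 : 1 < p) (hp2 : p ≤ 2)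
    (ha : 0 ≤ a) (hb : 0 ≤ b) (hs : |s| ≤ a * b) :
    (p - 1) / 2 * (a * a + b * b - 2 * s) * (1 + a + b) ^ (p - 2) ≤
      a ^ (p - 2) * a * a + b ^ (p - 2) * b * b - (a ^ (p - 2) + b ^ (p - 2)) * s := by
  rcases le_total b a with hba | hab
  · exact rpow_quadratic_form_lower_bound_of_le hp1 hp2 hb hba hs
  · have := rpow_quadratic_form_lower_bound_of_le hp1 hp2 ha hab (mul_comm a b ▸ hs)
    rw [add_right_comm] at this
    linarith

theorem Real.rpow_eq_sq_mul_rpow_rpow_mul_rpow_rpow {d h : ℝ} (p : ℝ) (hd : 0 ≤ d) (hh : 0 < h) :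
    d ^ p = (d ^ 2 * h ^ (p - 2)) ^ (p / 2) * (h ^ p) ^ ((2 - p) / 2) := by
  rw [Real.mul_rpow (by positivity) (by positivity), ← Real.rpow_mul hh.le, ← Real.rpow_mul hh.le,
    mul_assoc, ← Real.rpow_add hh, show (p - 2) * (p / 2) + p * ((2 - p) / 2) = 0 by ring,
    Real.rpow_zero, mul_one, ← Real.rpow_natCast, ← Real.rpow_mul hd]
  ring_nf

theorem Real.sq_mul_rpow_sub_two_le_rpow {d h : ℝ} (p : ℝ) (hd : 0 ≤ d) (hdh : d ≤ h) (hh : 0 < h) :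
    d ^ 2 * h ^ (p - 2) ≤ h ^ p :=
  calc d ^ 2 * h ^ (p - 2) ≤ h ^ 2 * h ^ (p - 2) := by gcongr
    _ = h ^ p := by
      rw [← Real.rpow_natCast, ← Real.rpow_add hh]
      norm_num

section

variable {Ω : Type*} [MeasurableSpace Ω] {μ : Measure Ω}

theorem integral_rpow_mul_rpow_le {f g : Ω → ℝ} (hf0 : 0 ≤ᵐ[μ] f) (hg0 : 0 ≤ᵐ[μ] g)
    (hf : Integrable f μ) (hg : Integrable g μ) {a b : ℝ} (ha : 0 ≤ a) (hb : 0 ≤ b)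
    (hab : a + b = 1) :
    ∫ ω, f ω ^ a * g ω ^ b ∂μ ≤ (∫ ω, f ω ∂μ) ^ a * (∫ ω, g ω ∂μ) ^ b := by
  have hfg0 : 0 ≤ᵐ[μ] fun ω => f ω ^ a * g ω ^ b := by
    filter_upwards [hf0, hg0] with ω hfω hgω
    exact mul_nonneg (Real.rpow_nonneg hfω a) (Real.rpow_nonneg hgω b)
  have hfg : AEStronglyMeasurable (fun ω => f ω ^ a * g ω ^ b) μ := by
    have := hf.aemeasurable
    have := hg.aemeasurable
    fun_prop
  rw [integral_eq_lintegral_of_nonneg_ae hfg0 hfg, integral_eq_lintegral_of_nonneg_ae hf0 hf.1,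
    integral_eq_lintegral_of_nonneg_ae hg0 hg.1, ENNReal.toReal_rpow, ENNReal.toReal_rpow,
    ← ENNReal.toReal_mul]
  refine ENNReal.toReal_mono (ENNReal.mul_ne_top
    (ENNReal.rpow_ne_top_of_nonneg ha hf.lintegral_lt_top.ne)
    (ENNReal.rpow_ne_top_of_nonneg hb hg.lintegral_lt_top.ne)) ?_
  calc ∫⁻ ω, ENNReal.ofReal (f ω ^ a * g ω ^ b) ∂μ
      = ∫⁻ ω, ENNReal.ofReal (f ω) ^ a * ENNReal.ofReal (g ω) ^ b ∂μ := by
        refine lintegral_congr_ae ?_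
        filter_upwards [hf0, hg0] with ω hfω hgω
        rw [ENNReal.ofReal_mul (Real.rpow_nonneg hfω a), ENNReal.ofReal_rpow_of_nonneg hfω ha,
          ENNReal.ofReal_rpow_of_nonneg hgω hb]
    _ ≤ _ := ENNReal.lintegral_mul_norm_pow_le hf.aemeasurable.ennreal_ofReal
        hg.aemeasurable.ennreal_ofReal ha hb hab

variable {E : Type*} [NormedAddCommGroup E]

theorem integrable_one_add_norm_add_norm_rpow [IsFiniteMeasure μ] {p : ℝ} (hp : 0 < p)
    {u v : Ω → E} (hu : MemLp u (ENNReal.ofReal p) μ) (hv : MemLp v (ENNReal.ofReal p) μ) :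
    Integrable (fun ω => (1 + ‖u ω‖ + ‖v ω‖) ^ p) μ := by
  have h_memLp := ((memLp_const (1 : ℝ)).add hu.norm).add hv.norm
  have := h_memLp.integrable_norm_rpow (by simpa using hp) ENNReal.ofReal_ne_top
  rw [ENNReal.toReal_ofReal hp.le] at this
  refine this.congr (ae_of_all _ fun ω => ?_)
  simp only [Pi.add_apply]
  rw [Real.norm_of_nonneg (by positivity)]

variable [InnerProductSpace ℝ E]

theorem mul_norm_sub_sq_mul_rpow_le_inner {p : ℝ} (hp1 : 1 < p) (hp2 : p ≤ 2) (x y : E) :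
    (p - 1) / 2 * ‖x - y‖ ^ 2 * (1 + ‖x‖ + ‖y‖) ^ (p - 2) ≤
      ⟪‖x‖ ^ (p - 2) • x - ‖y‖ ^ (p - 2) • y, x - y⟫ := by
  have h_inner : ⟪‖x‖ ^ (p - 2) • x - ‖y‖ ^ (p - 2) • y, x - y⟫ =
      ‖x‖ ^ (p - 2) * ‖x‖ * ‖x‖ + ‖y‖ ^ (p - 2) * ‖y‖ * ‖y‖ -
        (‖x‖ ^ (p - 2) + ‖y‖ ^ (p - 2)) * ⟪x, y⟫ := by
    simp only [inner_sub_left, inner_sub_right, real_inner_smul_left,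
      real_inner_self_eq_norm_mul_norm, real_inner_comm x y]
    ring
  rw [h_inner, norm_sub_sq_real]
  convert rpow_quadratic_form_lower_bound hp1 hp2 (norm_nonneg x) (norm_nonneg y)
    (abs_real_inner_le_norm x y) using 3
  ring

theorem norm_rpow_sub_two_smul_self {p : ℝ} (hp : p ≠ 1) (x : E) :
    ‖‖x‖ ^ (p - 2) • x‖ = ‖x‖ ^ (p - 1) := by
  rw [norm_smul, Real.norm_of_nonneg (by positivity), Real.rpow_sub_two_mul_self (norm_nonneg x) hp]

theorem abs_inner_le_two_mul_rpow {p : ℝ} (hp1 : 1 < p) (x y : E) :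
    |⟪‖x‖ ^ (p - 2) • x - ‖y‖ ^ (p - 2) • y, x - y⟫| ≤ 2 * (1 + ‖x‖ + ‖y‖) ^ p := by
  set h := 1 + ‖x‖ + ‖y‖
  have hh : 0 < h := by positivity
  have hx : ‖x‖ ^ (p - 1) ≤ h ^ (p - 1) := by
    gcongr
    linarith [norm_nonneg y]
  have hy : ‖y‖ ^ (p - 1) ≤ h ^ (p - 1) := by
    gcongr
    linarith [norm_nonneg x]
  have hxy : ‖x - y‖ ≤ h := by linarith [norm_sub_le x y]
  calc |⟪‖x‖ ^ (p - 2) • x - ‖y‖ ^ (p - 2) • y, x - y⟫|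
      ≤ ‖‖x‖ ^ (p - 2) • x - ‖y‖ ^ (p - 2) • y‖ * ‖x - y‖ := abs_real_inner_le_norm _ _
    _ ≤ (‖x‖ ^ (p - 1) + ‖y‖ ^ (p - 1)) * ‖x - y‖ := by
        gcongr
        rw [← norm_rpow_sub_two_smul_self hp1.ne' x, ← norm_rpow_sub_two_smul_self hp1.ne' y]
        exact norm_sub_le _ _
    _ ≤ (h ^ (p - 1) + h ^ (p - 1)) * h := by gcongr
    _ = 2 * h ^ p := by
        rw [Real.rpow_sub_one hh.ne']
        field_simp
        ring

theorem integral_norm_sub_rpow_le [IsFiniteMeasure μ] {p : ℝ} (hp1 : 1 < p) (hp2 : p ≤ 2)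
    {u v : Ω → E} (hu : MemLp u (ENNReal.ofReal p) μ) (hv : MemLp v (ENNReal.ofReal p) μ) :
    ∫ ω, ‖u ω - v ω‖ ^ p ∂μ ≤
      (2 / (p - 1) * ∫ ω, ⟪‖u ω‖ ^ (p - 2) • u ω - ‖v ω‖ ^ (p - 2) • v ω, u ω - v ω⟫ ∂μ)
          ^ (p / 2) * (∫ ω, (1 + ‖u ω‖ + ‖v ω‖) ^ p ∂μ) ^ ((2 - p) / 2) := by
  set h : Ω → ℝ := fun ω => 1 + ‖u ω‖ + ‖v ω‖ with h_def
  set F : Ω → ℝ := fun ω => ‖u ω - v ω‖ ^ 2 * h ω ^ (p - 2) with F_def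
  have hh : ∀ ω, 0 < h ω := fun ω => by positivity
  have hu_meas := hu.aestronglyMeasurable
  have hv_meas := hv.aestronglyMeasurable
  have hu_rpow : AEStronglyMeasurable (fun ω => ‖u ω‖ ^ (p - 2)) μ :=
    (hu_meas.norm.aemeasurable.pow_const _).aestronglyMeasurable
  have hv_rpow : AEStronglyMeasurable (fun ω => ‖v ω‖ ^ (p - 2)) μ :=
    (hv_meas.norm.aemeasurable.pow_const _).aestronglyMeasurable
  have hh_rpow : AEStronglyMeasurable (fun ω => h ω ^ (p - 2)) μ :=
    ((hu_meas.norm.const_add 1).add hv_meas.norm).aemeasurable.pow_const _ |>.aestronglyMeasurable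
  have hG : Integrable (fun ω => h ω ^ p) μ :=
    integrable_one_add_norm_add_norm_rpow (by linarith) hu hv
  have hF0 : ∀ ω, 0 ≤ F ω := fun ω => by positivity
  have hF_le : ∀ ω, F ω ≤ h ω ^ p := fun ω =>
    Real.sq_mul_rpow_sub_two_le_rpow p (norm_nonneg _)
      (by linarith [norm_sub_le (u ω) (v ω)]) (hh ω)
  have hF : Integrable F μ := hG.mono' (by fun_prop)
    (ae_of_all _ fun ω => (Real.norm_of_nonneg (hF0 ω)).trans_le (hF_le ω))
  have hW : Integrable (fun ω => ⟪‖u ω‖ ^ (p - 2) • u ω - ‖v ω‖ ^ (p - 2) • v ω, u ω - v ω⟫) μ :=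
    (hG.const_mul 2).mono' (by fun_prop) (ae_of_all _ fun ω => abs_inner_le_two_mul_rpow hp1 _ _)
  have hFW : ∫ ω, F ω ∂μ ≤
      2 / (p - 1) * ∫ ω, ⟪‖u ω‖ ^ (p - 2) • u ω - ‖v ω‖ ^ (p - 2) • v ω, u ω - v ω⟫ ∂μ := by
    rw [← integral_const_mul]
    refine integral_mono hF (hW.const_mul _) fun ω => ?_
    rw [div_mul_eq_mul_div, le_div_iff₀ (by linarith)]
    have := mul_norm_sub_sq_mul_rpow_le_inner hp1 hp2 (u ω) (v ω)
    simp only [F_def, h_def]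
    linarith
  calc ∫ ω, ‖u ω - v ω‖ ^ p ∂μ = ∫ ω, F ω ^ (p / 2) * (h ω ^ p) ^ ((2 - p) / 2) ∂μ :=
        integral_congr_ae (ae_of_all _ fun ω =>
          Real.rpow_eq_sq_mul_rpow_rpow_mul_rpow_rpow p (norm_nonneg _) (hh ω))
    _ ≤ (∫ ω, F ω ∂μ) ^ (p / 2) * (∫ ω, h ω ^ p ∂μ) ^ ((2 - p) / 2) :=
        integral_rpow_mul_rpow_le (ae_of_all _ hF0) (ae_of_all _ fun ω => by positivity) hF hG
          (by linarith) (by linarith) (by ring)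
    _ ≤ _ := by gcongr

end

theorem stmt_10 (p : ℝ) (hp1 : 1 < p) (hp2 : p ≤ 2) :
    ∃ c : ℝ, 0 < c ∧
      ∀ (Ω : Type) (_ : MeasurableSpace Ω) (μ : Measure Ω), IsFiniteMeasure μ →
      ∀ (n : ℕ) (u v : Ω → EuclideanSpace ℝ (Fin n)),
        Measurable u → Measurable v →
        MemLp u (ENNReal.ofReal p) μ → MemLp v (ENNReal.ofReal p) μ →
        (∫ ω, ‖u ω - v ω‖ ^ p ∂μ) ≤
          (c * ∫ ω, ⟪(‖u ω‖ ^ (p - 2)) • u ω - (‖v ω‖ ^ (p - 2)) • v ω, u ω - v ω⟫ ∂μ)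
              ^ (p / 2) *
            (∫ ω, (1 + ‖u ω‖ + ‖v ω‖) ^ p ∂μ) ^ ((2 - p) / 2) := by
  refine ⟨2 / (p - 1), div_pos two_pos (by linarith), ?_⟩
  intro Ω _ μ _ n u v _ _ hu hv
  exact integral_norm_sub_rpow_le hp1 hp2 hu hv
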